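/- arXiv:0801.0313 — 7 statements merged into one kernel-verified Lean document; each statement's English description precedes it below -/
import Mathlib

section
/- Let A be a commutative algebra and let (P_n) be a pseudo-finite sequence of prime ideals in A, i.e., every element a of A belonging to the union of the P_n lies in all but finitely many of the P_n. Then the union ⋃_n P_n is either a prime ideal of A or equal to A. -/
/-!
Any two elements of `⋃ n, P n` each lie in all but finitely many `P n`, hence in a common one, so
the union is closed under addition and is therefore the ideal `⨆ n, P n`. An ideal that is a union
of prime ideals is prime, so the first alternative always holds.
-/

def PseudoFinite {A : Type*} [CommRing A] (P : ℕ → Ideal A) : Prop :=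
  ∀ a : A, (∃ n, a ∈ P n) → {n | a ∉ P n}.Finite

open Filter

namespace PseudoFinite

variable {A : Type*} [CommRing A] {P : ℕ → Ideal A}

theorem eventually_mem (hP : PseudoFinite P) {a : A} (ha : a ∈ ⋃ n, (P n : Set A)) :
    ∀ᶠ n in cofinite, a ∈ P n :=
  eventually_cofinite.2 (hP a (Set.mem_iUnion.1 ha))

theorem exists_mem_and_mem (hP : PseudoFinite P) {a b : A} (ha : a ∈ ⋃ n, (P n : Set A))
    (hb : b ∈ ⋃ n, (P n : Set A)) : ∃ n, a ∈ P n ∧ b ∈ P n :=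
  ((hP.eventually_mem ha).and (hP.eventually_mem hb)).exists

theorem coe_iSup (hP : PseudoFinite P) : ((⨆ n, P n : Ideal A) : Set A) = ⋃ n, (P n : Set A) := by
  refine subset_antisymm (fun x hx => ?_) (Set.iUnion_subset fun n => le_iSup P n)
  refine Submodule.iSup_induction P (motive := (· ∈ ⋃ n, (P n : Set A))) hx
    (fun n x hx => Set.mem_iUnion.2 ⟨n, hx⟩) (Set.mem_iUnion.2 ⟨0, (P 0).zero_mem⟩)
    fun a b ha hb => ?_
  obtain ⟨n, han, hbn⟩ := hP.exists_mem_and_mem ha hb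
  exact Set.mem_iUnion.2 ⟨n, (P n).add_mem han hbn⟩

end PseudoFinite

theorem Ideal.isPrime_of_coe_eq_iUnion {A ι : Type*} [CommRing A] {P : ι → Ideal A}
    (hP : ∀ i, (P i).IsPrime) {Q : Ideal A} (hQ : (Q : Set A) = ⋃ i, (P i : Set A)) :
    Q.IsPrime := by
  have mem_iff (x : A) : x ∈ Q ↔ ∃ i, x ∈ P i := by
    rw [← SetLike.mem_coe, hQ, Set.mem_iUnion]; rfl
  refine ⟨fun hQtop => ?_, fun {a b} hab => ?_⟩
  · obtain ⟨i, hi⟩ := (mem_iff 1).1 (hQtop ▸ Submodule.mem_top)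
    exact (hP i).ne_top ((P i).eq_top_of_isUnit_mem hi isUnit_one)
  · obtain ⟨i, hi⟩ := (mem_iff _).1 hab
    exact ((hP i).mem_or_mem hi).imp (fun ha => (mem_iff a).2 ⟨i, ha⟩)
      (fun hb => (mem_iff b).2 ⟨i, hb⟩)

/-- The union of a pseudo-finite sequence of prime ideals in a commutative
algebra `A` is either a prime ideal of `A` or equal to `A`. -/
theorem union_pseudoFinite_primes_isPrime_or_univ {A : Type*} [CommRing A]
    (P : ℕ → Ideal A) (hprime : ∀ n, (P n).IsPrime) (hpf : PseudoFinite P) :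
    (∃ Q : Ideal A, Q.IsPrime ∧ (Q : Set A) = ⋃ n, (P n : Set A)) ∨
      (⋃ n, (P n : Set A)) = Set.univ :=
  Or.inl ⟨⨆ n, P n, Ideal.isPrime_of_coe_eq_iUnion hprime hpf.coe_iSup, hpf.coe_iSup⟩
end

section
/- Let Ω be a locally compact Hausdorff space and let (P_n) be a countable family of prime ideals in C_0(Ω). Then ⋃_n P_n ≠ C_0(Ω). -/
open ZeroAtInfty

/-- `I` is an ideal of a non-unital commutative ring (as a set). -/
def IsIdeal {A : Type*} [NonUnitalCommRing A] (I : Set A) : Prop :=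
  (0 : A) ∈ I ∧ (∀ a ∈ I, ∀ b ∈ I, a + b ∈ I) ∧ (∀ a ∈ I, -a ∈ I) ∧
    ∀ a ∈ I, ∀ b : A, a * b ∈ I

/-- `I` is a prime ideal of a non-unital commutative ring: a proper ideal such
that `a * b ∈ I` implies `a ∈ I` or `b ∈ I`. -/
def IsPrimeIdeal {A : Type*} [NonUnitalCommRing A] (I : Set A) : Prop :=
  IsIdeal I ∧ I ≠ Set.univ ∧ ∀ a b : A, a * b ∈ I → a ∈ I ∨ b ∈ I

/-!
If `g n ∉ P n`, the convergent series `f = ∑ cₙ |gₙ|²` with small positive weights `cₙ`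
dominates every `|gₙ|²` up to a constant. In `C₀(Ω)` an element dominated in modulus by a
member `b` of a prime ideal lies in it: `a³ = b · (a³ / b)`, and `a³ / b` is again in `C₀(Ω)`
because it is bounded by a multiple of `|a|²`. So `f ∈ P m` would force `g m ∈ P m`.
-/

open Filter Topology

theorem continuous_of_norm_le_of_continuousOn {X E : Type*} [TopologicalSpace X]
    [NormedAddGroup E] {F : X → E} {g : X → ℝ} (hg : Continuous g)
    (hF : ContinuousOn F {x | g x ≠ 0}) (hFg : ∀ x, ‖F x‖ ≤ g x) : Continuous F := by
  refine continuous_iff_continuousAt.mpr fun x => ?_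
  by_cases hx : g x = 0
  · have hFx : F x = 0 := norm_le_zero_iff.mp (hx ▸ hFg x)
    rw [ContinuousAt, hFx]
    exact squeeze_zero_norm hFg (hx ▸ hg.tendsto x)
  · exact hF.continuousAt ((isOpen_ne_fun hg continuous_const).mem_nhds hx)

namespace IsPrimeIdeal

variable {A : Type*} [NonUnitalCommRing A] {P : Set A}

theorem mul_mem_right (hP : IsPrimeIdeal P) {a : A} (ha : a ∈ P) (b : A) : a * b ∈ P :=
  hP.1.2.2.2 a ha b

theorem mem_of_mul_self_mem (hP : IsPrimeIdeal P) {a : A} (h : a * a ∈ P) : a ∈ P :=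
  (hP.2.2 a a h).elim id id

theorem mem_of_mul_mul_self_mem (hP : IsPrimeIdeal P) {a : A} (h : a * (a * a) ∈ P) :
    a ∈ P :=
  (hP.2.2 _ _ h).elim id hP.mem_of_mul_self_mem

end IsPrimeIdeal

namespace ZeroAtInftyContinuousMap

variable {X : Type*} [TopologicalSpace X]

theorem hasSum_apply {ι β : Type*} [NormedAddCommGroup β] {g : ι → C₀(X, β)} {f : C₀(X, β)}
    (h : HasSum g f) (x : X) : HasSum (fun i => g i x) (f x) :=
  h.map (⟨⟨fun f => f x, rfl⟩, fun _ _ => rfl⟩ : C₀(X, β) →+ β)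
    ((continuous_eval_const x).comp isometry_toBCF.continuous)

theorem exists_mul_mul_self_eq_mul_of_norm_le {𝕜 : Type*} [NormedField 𝕜] (a b : C₀(X, 𝕜))
    (C : ℝ) (hab : ∀ x, ‖a x‖ ≤ C * ‖b x‖) : ∃ q : C₀(X, 𝕜), a * (a * a) = b * q := by
  have ha : ∀ x, b x = 0 → a x = 0 := fun x hx =>
    norm_le_zero_iff.mp (by simpa [hx] using hab x)
  have hbound : ∀ x, ‖a x ^ 3 / b x‖ ≤ C * ‖a x‖ ^ 2 := by
    intro x
    by_cases hx : b x = 0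
    · simp [hx, ha x hx]
    · rw [norm_div, norm_pow, div_le_iff₀ (norm_pos_iff.mpr hx)]
      calc ‖a x‖ ^ 3 = ‖a x‖ ^ 2 * ‖a x‖ := by ring
        _ ≤ ‖a x‖ ^ 2 * (C * ‖b x‖) := by gcongr; exact hab x
        _ = C * ‖a x‖ ^ 2 * ‖b x‖ := by ring
  have hcont : Continuous fun x => a x ^ 3 / b x := by
    refine continuous_of_norm_le_of_continuousOn
      (continuous_const.mul ((map_continuous a).norm.pow 2)) ?_ hbound
    refine ((map_continuous a).pow 3).continuousOn.div (map_continuous b).continuousOn ?_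
    intro x hx hbx
    simp [ha x hbx] at hx
  have hzero : Tendsto (fun x => a x ^ 3 / b x) (cocompact X) (𝓝 0) := by
    refine squeeze_zero_norm hbound ?_
    simpa using ((zero_at_infty a).norm.pow 2).const_mul C
  refine ⟨⟨⟨_, hcont⟩, hzero⟩, ?_⟩
  ext x
  simp only [mul_apply]
  by_cases hx : b x = 0
  · simp [hx, ha x hx]
  · change a x * (a x * a x) = b x * (a x ^ 3 / b x)
    field_simp

theorem exists_norm_sq_le_mul_norm {𝕜 : Type*} [RCLike 𝕜] (g : ℕ → C₀(X, 𝕜)) :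
    ∃ f : C₀(X, 𝕜), ∀ n, ∃ C : ℝ, ∀ x, ‖g n x‖ ^ 2 ≤ C * ‖f x‖ := by
  set c : ℕ → ℝ := fun n => (2 ^ n * (‖g n‖ ^ 2 + 1))⁻¹
  have hc : ∀ n, 0 < c n := fun n => by positivity
  set term : ℕ → C₀(X, 𝕜) := fun n => (c n : 𝕜) • (star (g n) * g n)
  have hterm : ∀ n x, term n x = ((c n * ‖g n x‖ ^ 2 : ℝ) : 𝕜) := fun n x => by
    simp [term, RCLike.star_def, RCLike.conj_mul]
  have hnorm : ∀ n, ‖term n‖ ≤ (1 / 2) ^ n := fun n => by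
    calc ‖term n‖ = c n * ‖star (g n) * g n‖ := by
          simp only [term, norm_smul, RCLike.norm_ofReal, abs_of_pos (hc n)]
      _ = c n * (‖g n‖ * ‖g n‖) := congrArg _ CStarRing.norm_star_mul_self
      _ ≤ (1 / 2) ^ n := by
          rw [div_pow, one_pow, ← sq, le_div_iff₀ (by positivity)]
          calc c n * ‖g n‖ ^ 2 * 2 ^ n = ‖g n‖ ^ 2 / (‖g n‖ ^ 2 + 1) := by
                simp only [c]; field_simp
            _ ≤ 1 := (div_le_one (by positivity)).mpr (by linarith)
  have hsum : HasSum term (∑' n, term n) :=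
    (Summable.of_norm_bounded summable_geometric_two hnorm).hasSum
  refine ⟨∑' n, term n, fun n => ⟨(c n)⁻¹, fun x => ?_⟩⟩
  have hre := RCLike.hasSum_re 𝕜 (hasSum_apply hsum x)
  simp only [hterm, RCLike.ofReal_re] at hre
  rw [le_inv_mul_iff₀ (hc n)]
  exact (le_hasSum hre n fun j _ => by positivity).trans (RCLike.re_le_norm _)

end ZeroAtInftyContinuousMap

theorem IsPrimeIdeal.mem_of_norm_le_mul {X 𝕜 : Type*} [TopologicalSpace X] [NormedField 𝕜]
    {P : Set C₀(X, 𝕜)} (hP : IsPrimeIdeal P) {a b : C₀(X, 𝕜)} (C : ℝ)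
    (hab : ∀ x, ‖a x‖ ≤ C * ‖b x‖) (hb : b ∈ P) : a ∈ P := by
  obtain ⟨q, hq⟩ := ZeroAtInftyContinuousMap.exists_mul_mul_self_eq_mul_of_norm_le a b C hab
  exact hP.mem_of_mul_mul_self_mem (hq ▸ hP.mul_mem_right hb q)

theorem union_countably_many_primes_ne_univ_general {Ω : Type*} [TopologicalSpace Ω]
    (P : ℕ → Set C₀(Ω, ℂ)) (hP : ∀ n, IsPrimeIdeal (P n)) :
    (⋃ n, P n) ≠ Set.univ := by
  choose g hg using fun n => Set.ne_univ_iff_exists_notMem (P n) |>.mp (hP n).2.1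
  obtain ⟨f, hf⟩ := ZeroAtInftyContinuousMap.exists_norm_sq_le_mul_norm g
  intro hU
  obtain ⟨m, hfm⟩ := Set.mem_iUnion.mp (hU ▸ Set.mem_univ f)
  obtain ⟨C, hC⟩ := hf m
  have hgg : g m * g m ∈ P m :=
    (hP m).mem_of_norm_le_mul C (by simpa [ZeroAtInftyContinuousMap.mul_apply, sq] using hC) hfm
  exact hg m ((hP m).mem_of_mul_self_mem hgg)

/-- The union of countably many prime ideals in `C₀(Ω)` is not all of `C₀(Ω)`. -/
theorem union_countably_many_primes_ne_univ {Ω : Type*} [TopologicalSpace Ω]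
    [LocallyCompactSpace Ω] [T2Space Ω]
    (P : ℕ → Set C₀(Ω, ℂ)) (hP : ∀ n, IsPrimeIdeal (P n)) :
    (⋃ n, P n) ≠ Set.univ :=
  union_countably_many_primes_ne_univ_general P hP
end

section
/- Let A be a commutative ring, J a semiprime ideal (i.e., a radical ideal) in A, and a, b ∈ A such that the quotient ideals (J : a) = {x ∈ A : ax ∈ J} and (J : b) = {x ∈ A : bx ∈ J} are both prime ideals. Then the following are equivalent: (a) (J : a) ⊆ (J : b); (b) ab ∉ J; (c) (J : a) = (J : b). -/
/-- The quotient ideal `(J : a) = {x | a * x ∈ J}`. -/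
def quotIdeal {A : Type*} [CommRing A] (J : Ideal A) (a : A) : Ideal A where
  carrier := {x | a * x ∈ J}
  zero_mem' := by simp
  add_mem' := by
    intro x y hx hy
    simpa [mul_add] using J.add_mem hx hy
  smul_mem' := by
    intro c x hx
    simp only [smul_eq_mul, Set.mem_setOf_eq, mul_left_comm a c x] at *
    exact J.mul_mem_left c hx

/-!
If `a * b ∉ J` and `(J : b)` is prime, then `a * x ∈ J` forces `x ∈ (J : b)`, since the other
alternative `a ∈ (J : b)` is excluded; symmetrically, so `(J : a) = (J : b)`. Conversely, if
`a * b ∈ J` then `b ∈ (J : a)`; were `(J : a) ⊆ (J : b)`, we would get `b ^ 2 ∈ J`, hence `b ∈ J`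
as `J` is radical, and `(J : b)` would be the whole ring.
-/

namespace quotIdeal

variable {A : Type*} [CommRing A] {J : Ideal A} {a b x : A}

@[simp]
theorem mem_iff : x ∈ quotIdeal J a ↔ a * x ∈ J := Iff.rfl

theorem eq_top_iff : quotIdeal J a = ⊤ ↔ a ∈ J := by
  rw [Ideal.eq_top_iff_one, mem_iff, mul_one]

theorem le_of_mul_notMem (hb : (quotIdeal J b).IsPrime) (hab : a * b ∉ J) :
    quotIdeal J a ≤ quotIdeal J b := by
  intro x hx
  have hax : a * x ∈ quotIdeal J b := by
    simpa only [mem_iff, mul_left_comm b] using J.mul_mem_left b hx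
  refine (hb.mem_or_mem hax).resolve_left fun ha => hab ?_
  rwa [mem_iff, mul_comm] at ha

theorem mul_notMem_of_le (hJ : J.IsRadical) (hb : quotIdeal J b ≠ ⊤)
    (hle : quotIdeal J a ≤ quotIdeal J b) : a * b ∉ J := by
  intro hab
  have hbb : b ^ 2 ∈ J := by rw [sq]; exact hle (mem_iff.mpr hab)
  exact hb (eq_top_iff.mpr (hJ ⟨2, hbb⟩))

end quotIdeal

/-- For a semiprime (radical) ideal `J` and elements `a`, `b` such that
`(J : a)` and `(J : b)` are prime, the following are equivalent:
(a) `(J : a) ⊆ (J : b)`; (b) `a * b ∉ J`; (c) `(J : a) = (J : b)`. -/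
theorem quotIdeal_prime_tfae {A : Type*} [CommRing A] (J : Ideal A)
    (hJ : ∀ (x : A) (n : ℕ), x ^ n ∈ J → x ∈ J) (a b : A)
    (ha : (quotIdeal J a).IsPrime) (hb : (quotIdeal J b).IsPrime) :
    (quotIdeal J a ≤ quotIdeal J b ↔ a * b ∉ J) ∧
      (a * b ∉ J ↔ quotIdeal J a = quotIdeal J b) := by
  have hrad : J.IsRadical := fun x ⟨n, hn⟩ => hJ x n hn
  have notMem_of_le : quotIdeal J a ≤ quotIdeal J b → a * b ∉ J :=
    quotIdeal.mul_notMem_of_le hrad hb.ne_top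
  have eq_of_notMem : a * b ∉ J → quotIdeal J a = quotIdeal J b := fun hab =>
    le_antisymm (quotIdeal.le_of_mul_notMem hb hab)
      (quotIdeal.le_of_mul_notMem ha (by rwa [mul_comm]))
  exact ⟨⟨notMem_of_le, fun hab => (eq_of_notMem hab).le⟩,
    ⟨eq_of_notMem, fun heq => notMem_of_le heq.le⟩⟩
end

section
/- Let A be a commutative algebra and let 𝔓 be a relatively compact family of prime ideals in A, i.e., every sequence in 𝔓 has a pseudo-finite subsequence. Then the intersection I = ⋂{P : P ∈ 𝔓} is an abstract continuity ideal: for every sequence (a_n) in A there exists n_0 such that (I : a_1⋯a_n) = (I : a_1⋯a_{n+1}) for all n ≥ n_0. -/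
/-- An ideal `I` is an abstract continuity ideal if for every sequence
`(a n)` the increasing chain of quotient ideals `(I : a 0 ⋯ a (n-1))`
eventually stabilizes. -/
def AbstractContinuityIdeal {A : Type*} [CommRing A] (I : Ideal A) : Prop :=
  ∀ a : ℕ → A, ∃ n₀ : ℕ, ∀ n ≥ n₀,
    quotIdeal I (∏ i ∈ Finset.range n, a i) =
      quotIdeal I (∏ i ∈ Finset.range (n + 1), a i)

/-- A family of prime ideals is relatively compact if every sequence in it has
a pseudo-finite subsequence. -/
def RelativelyCompactFamily {A : Type*} [CommRing A] (𝔓 : Set (Ideal A)) : Prop :=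
  ∀ P : ℕ → Ideal A, (∀ n, P n ∈ 𝔓) →
    ∃ φ : ℕ → ℕ, StrictMono φ ∧ PseudoFinite (fun n => P (φ n))

open Finset Filter

@[simp]
theorem mem_quotIdeal {A : Type*} [CommRing A] {J : Ideal A} {a x : A} :
    x ∈ quotIdeal J a ↔ a * x ∈ J :=
  Iff.rfl

theorem quotIdeal_mono_of_dvd {A : Type*} [CommRing A] {J : Ideal A} {a b : A} (h : a ∣ b) :
    quotIdeal J a ≤ quotIdeal J b := by
  obtain ⟨c, rfl⟩ := h
  intro x hx
  rw [mem_quotIdeal, mul_right_comm]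
  exact J.mul_mem_right c hx

theorem exists_prime_mem_of_quotIdeal_prod_ne {A : Type*} [CommRing A] {𝔓 : Set (Ideal A)}
    (hprime : ∀ P ∈ 𝔓, P.IsPrime) {a : ℕ → A} {n : ℕ}
    (h : quotIdeal (sInf 𝔓) (∏ i ∈ range n, a i) ≠
      quotIdeal (sInf 𝔓) (∏ i ∈ range (n + 1), a i)) :
    ∃ P ∈ 𝔓, a n ∈ P ∧ ∀ i < n, a i ∉ P := by
  have hdvd : ∏ i ∈ range n, a i ∣ ∏ i ∈ range (n + 1), a i := by
    rw [prod_range_succ]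
    exact dvd_mul_right _ _
  obtain ⟨x, hx_succ, hx⟩ := SetLike.exists_of_lt ((quotIdeal_mono_of_dvd hdvd).lt_of_ne h)
  obtain ⟨P, hP𝔓, hxP⟩ : ∃ P ∈ 𝔓, (∏ i ∈ range n, a i) * x ∉ P := by
    simpa [Ideal.mem_sInf] using hx
  have : P.IsPrime := hprime P hP𝔓
  have hsuccP : a n * ((∏ i ∈ range n, a i) * x) ∈ P := by
    rw [← mul_assoc, mul_comm (a n), ← prod_range_succ]
    exact Ideal.mem_sInf.1 (mem_quotIdeal.1 hx_succ) hP𝔓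
  have hprodP : ∏ i ∈ range n, a i ∉ P := fun hp => hxP (P.mul_mem_right x hp)
  refine ⟨P, hP𝔓, (this.mem_or_mem hsuccP).resolve_right hxP, fun i hi hai => ?_⟩
  exact hprodP (Ideal.IsPrime.prod_mem_iff.2 ⟨i, mem_range.2 hi, hai⟩)

theorem not_pseudoFinite_of_forall_lt_not_mem {A : Type*} [CommRing A] {Q : ℕ → Ideal A}
    {b : ℕ → A} (hmem : ∀ k, b k ∈ Q k) (hnot : ∀ i k, i < k → b i ∉ Q k) :
    ¬ PseudoFinite Q := fun hQ =>
  ((Set.Ioi_infinite 0).mono fun k hk => hnot 0 k hk) (hQ (b 0) ⟨0, hmem 0⟩)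

/-- The intersection of a relatively compact family of prime ideals is an
abstract continuity ideal. -/
theorem sInf_relativelyCompact_is_ACI {A : Type*} [CommRing A]
    (𝔓 : Set (Ideal A)) (hprime : ∀ P ∈ 𝔓, P.IsPrime)
    (hrc : RelativelyCompactFamily 𝔓) :
    AbstractContinuityIdeal (sInf 𝔓) := by
  intro a
  by_contra! h
  obtain ⟨ψ, hψ, hjump⟩ := extraction_of_frequently_atTop (frequently_atTop.2 h)
  choose P hP𝔓 hPa using fun k => exists_prime_mem_of_quotIdeal_prod_ne hprime (hjump k)
  obtain ⟨φ, hφ, hpf⟩ := hrc P hP𝔓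
  exact not_pseudoFinite_of_forall_lt_not_mem (b := fun k => a (ψ (φ k)))
    (fun k => (hPa (φ k)).1) (fun i k hik => (hPa (φ k)).2 _ (hψ (hφ hik))) hpf
end

section
/- Let A be a commutative ring, Π its set of prime ideals, and τ the topology on Π generated by the sets U^b_{a_1,...,a_m} = {P prime : a_1,...,a_m ∈ P, b ∉ P}. Then (Π, τ) is Hausdorff. -/
/-- The basic set `U^b_{a₁,…,a_m} = {P prime : aᵢ ∈ P for all i, b ∉ P}`,
viewed as a subset of the set `Π` of prime ideals of `A`. -/
def basicSet {A : Type*} [CommRing A] {m : ℕ} (a : Fin m → A) (b : A) :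
    Set {P : Ideal A // P.IsPrime} :=
  {P | (∀ i, a i ∈ P.1) ∧ b ∉ P.1}

/-- The collection of all basic sets. -/
def basicSets (A : Type*) [CommRing A] : Set (Set {P : Ideal A // P.IsPrime}) :=
  {S | ∃ (m : ℕ) (a : Fin m → A) (b : A), S = basicSet a b}

/-!
For each `b ∈ A` the complementary sets `{P | b ∉ P} = U^b` and `{P | b ∈ P} = U^1_b` are both
basic open, and two distinct primes are separated by them for any `b` lying in exactly one of the two.
-/

open TopologicalSpace Topology

namespace basicSets

variable {A : Type*} [CommRing A]

theorem isOpen_setOf_notMem (b : A) :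
    IsOpen[generateFrom (basicSets A)] {P | b ∉ P.1} :=
  isOpen_generateFrom_of_mem ⟨0, Fin.elim0, b, by ext; simp [basicSet]⟩

theorem isOpen_setOf_mem (b : A) :
    IsOpen[generateFrom (basicSets A)] {P | b ∈ P.1} :=
  isOpen_generateFrom_of_mem ⟨1, fun _ => b, 1, by
    ext P
    simp [basicSet, (Ideal.ne_top_iff_one P.1).1 P.2.ne_top]⟩

theorem separated_of_notMem_of_mem {P Q : {P : Ideal A // P.IsPrime}} {b : A}
    (hP : b ∉ P.1) (hQ : b ∈ Q.1) :
    ∃ u v : Set {P : Ideal A // P.IsPrime},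
      IsOpen[generateFrom (basicSets A)] u ∧ IsOpen[generateFrom (basicSets A)] v ∧
        P ∈ u ∧ Q ∈ v ∧ Disjoint u v :=
  ⟨{R | b ∉ R.1}, {R | b ∈ R.1}, isOpen_setOf_notMem b, isOpen_setOf_mem b, hP, hQ,
    Set.disjoint_left.2 fun _ hR hR' => hR hR'⟩

end basicSets

/-- The topology `τ` on the set of prime ideals generated by the basic sets
`U^b_{a₁,…,a_m}` is Hausdorff. -/
theorem basicSets_topology_t2 (A : Type*) [CommRing A] :
    @T2Space {P : Ideal A // P.IsPrime}
      (TopologicalSpace.generateFrom (basicSets A)) := by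
  refine @T2Space.mk _ (generateFrom (basicSets A)) fun P Q hne => ?_
  have hnot_le_ge : ¬ (P.1 ≤ Q.1 ∧ Q.1 ≤ P.1) := fun h => hne (Subtype.ext (le_antisymm h.1 h.2))
  rcases not_and_or.1 hnot_le_ge with hPQ | hQP
  · obtain ⟨b, hbP, hbQ⟩ := Set.not_subset.1 hPQ
    obtain ⟨u, v, hu, hv, hQu, hPv, huv⟩ := basicSets.separated_of_notMem_of_mem hbQ hbP
    exact ⟨v, u, hv, hu, hPv, hQu, huv.symm⟩
  · obtain ⟨b, hbQ, hbP⟩ := Set.not_subset.1 hQP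
    exact basicSets.separated_of_notMem_of_mem hbP hbQ
end

section
/- Let A be a commutative ring, Π its prime spectrum with the topology τ generated by the sets U^b_{a_1,...,a_m} = {P prime : a_i ∈ P (1 ≤ i ≤ m), b ∉ P}. Then for each u ∈ A, the set U^u_0 = {P prime : u ∉ P} is compact in τ. -/
namespace Ultrafilter

variable {A : Type*} [CommRing A] (F : Ultrafilter {P : Ideal A // P.IsPrime})

def limIdeal : Ideal A where
  carrier := {a | ∀ᶠ P : {P : Ideal A // P.IsPrime} in F, a ∈ P.1}
  zero_mem' := .of_forall fun P => P.1.zero_mem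
  add_mem' ha hb := (ha.and hb).mono fun P h => P.1.add_mem h.1 h.2
  smul_mem' c _ ha := ha.mono fun P h => P.1.mul_mem_left c h

variable {F} in
theorem mem_limIdeal {a : A} :
    a ∈ F.limIdeal ↔ ∀ᶠ P : {P : Ideal A // P.IsPrime} in F, a ∈ P.1 :=
  Iff.rfl

variable {F} in
theorem notMem_limIdeal {a : A} :
    a ∉ F.limIdeal ↔ ∀ᶠ P : {P : Ideal A // P.IsPrime} in F, a ∉ P.1 :=
  eventually_not.symm

theorem limIdeal_isPrime : F.limIdeal.IsPrime where
  ne_top' h := by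
    obtain ⟨P, hP⟩ := (mem_limIdeal.1 (h ▸ Submodule.mem_top : (1 : A) ∈ F.limIdeal)).exists
    exact P.2.ne_top ((Ideal.eq_top_iff_one _).2 hP)
  mem_or_mem' hxy := eventually_or.1 (hxy.mono fun P h => P.2.mem_or_mem h)

def limPrime : {P : Ideal A // P.IsPrime} := ⟨F.limIdeal, F.limIdeal_isPrime⟩

theorem le_nhds_limPrime :
    (F : Filter {P : Ideal A // P.IsPrime}) ≤
      @nhds _ (TopologicalSpace.generateFrom (basicSets A)) F.limPrime := by
  refine TopologicalSpace.tendsto_nhds_generateFrom_iff.2 ?_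
  rintro _ ⟨m, a, b, rfl⟩ ⟨ha, hb⟩
  have hFa : ∀ᶠ P : {P : Ideal A // P.IsPrime} in F, ∀ i, a i ∈ P.1 :=
    Filter.eventually_all.2 ha
  exact hFa.and (notMem_limIdeal.1 hb)

end Ultrafilter

/-- For each `u ∈ A`, the set `U^u_0 = {P prime : u ∉ P}` is compact in the
topology generated by the basic sets. -/
theorem basicSet_compl_compact (A : Type*) [CommRing A] (u : A) :
    @IsCompact {P : Ideal A // P.IsPrime}
      (TopologicalSpace.generateFrom (basicSets A))
      {P : {P : Ideal A // P.IsPrime} | u ∉ P.1} := by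
  let _ := TopologicalSpace.generateFrom (basicSets A)
  refine isCompact_iff_ultrafilter_le_nhds.2 fun F hF => ⟨F.limPrime, ?_, F.le_nhds_limPrime⟩
  exact Ultrafilter.notMem_limIdeal.2 (Filter.le_principal_iff.1 hF)
end

section
/- Let A be a commutative algebra and I an abstract continuity ideal in A. Let 𝔓_0 be the set of minimal elements among the prime ideals of the form (I : a), a ∈ A. Then 𝔓_0 is a relatively compact family of prime ideals: every sequence in 𝔓_0 has a pseudo-finite subsequence. -/
theorem exists_seq_mem_forall_lt_not_mem {α : Type*} (T : α → Set ℕ)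
    (h : ∀ M : Set ℕ, M.Infinite → ∃ a, ∃ m ∈ M, m ∈ T a ∧ (M \ T a).Infinite) :
    ∃ (a : ℕ → α) (m : ℕ → ℕ), ∀ k, m k ∈ T (a k) ∧ ∀ j < k, m k ∉ T (a j) := by
  choose a m hmM hmT hinf using h
  let M : ℕ → {M : Set ℕ // M.Infinite} := fun k =>
    Nat.rec ⟨Set.univ, Set.infinite_univ⟩ (fun _ M => ⟨M.1 \ T (a M.1 M.2), hinf M.1 M.2⟩) k
  have hanti : Antitone fun k => (M k).1 := antitone_nat_of_succ_le fun _ => Set.sdiff_subset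
  refine ⟨fun k => a (M k).1 (M k).2, fun k => m (M k).1 (M k).2,
    fun k => ⟨hmT _ _, fun j hj hmem => ?_⟩⟩
  exact (hanti hj (hmM (M k).1 (M k).2)).2 hmem

section

variable {A : Type*} [CommRing A]

theorem exists_mem_infinite_not_mem_of_not_pseudoFinite (P : ℕ → Ideal A) {M : Set ℕ}
    (hM : M.Infinite) (h : ¬PseudoFinite fun n => P (Nat.nth (· ∈ M) n)) :
    ∃ a, ∃ m ∈ M, a ∈ P m ∧ (M \ {n | a ∈ P n}).Infinite := by
  simp only [PseudoFinite, not_forall, exists_prop] at h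
  obtain ⟨a, ⟨k, hk⟩, hinf⟩ := h
  refine ⟨a, _, Nat.nth_mem_of_infinite hM k, hk, ?_⟩
  refine (Set.Infinite.image (Nat.nth_strictMono hM).injective.injOn hinf).mono ?_
  rintro _ ⟨n, hn, rfl⟩
  exact ⟨Nat.nth_mem_of_infinite hM n, hn⟩

theorem exists_strictMono_pseudoFinite_or_exists_separating (P : ℕ → Ideal A) :
    (∃ φ : ℕ → ℕ, StrictMono φ ∧ PseudoFinite fun n => P (φ n)) ∨
      ∃ (a : ℕ → A) (m : ℕ → ℕ), ∀ k, a k ∈ P (m k) ∧ ∀ j < k, a j ∉ P (m k) := by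
  refine or_iff_not_imp_left.2 fun h => ?_
  push Not at h
  exact exists_seq_mem_forall_lt_not_mem (fun a => {n | a ∈ P n}) fun M hM =>
    exists_mem_infinite_not_mem_of_not_pseudoFinite P hM (h _ (Nat.nth_strictMono hM))

theorem mem_quotIdeal_comm {J : Ideal A} {a x : A} : x ∈ quotIdeal J a ↔ a ∈ quotIdeal J x := by
  show a * x ∈ J ↔ x * a ∈ J
  rw [mul_comm]

theorem quotIdeal_ne_quotIdeal_mul {J : Ideal A} {b x y : A} (hx : x ∉ quotIdeal J b)
    (hy : y ∈ quotIdeal J b) : quotIdeal J x ≠ quotIdeal J (x * y) := by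
  intro h
  have hb : b ∈ quotIdeal J (x * y) := mem_quotIdeal_comm.1 ((quotIdeal J b).mul_mem_left x hy)
  exact hx (mem_quotIdeal_comm.2 (h ▸ hb))

theorem AbstractContinuityIdeal.false_of_separating {I : Ideal A}
    (hI : AbstractContinuityIdeal I) {a b : ℕ → A} (hb : ∀ k, (quotIdeal I (b k)).IsPrime)
    (ha : ∀ k, a k ∈ quotIdeal I (b k)) (hsep : ∀ k, ∀ j < k, a j ∉ quotIdeal I (b k)) :
    False := by
  obtain ⟨n, hn⟩ := hI a
  have hprod : (∏ i ∈ Finset.range n, a i) ∉ quotIdeal I (b n) := by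
    rw [(hb n).prod_mem_iff]
    rintro ⟨j, hj, hmem⟩
    exact hsep n j (Finset.mem_range.1 hj) hmem
  have hstable := hn n le_rfl
  rw [Finset.prod_range_succ] at hstable
  exact quotIdeal_ne_quotIdeal_mul hprod (ha n) hstable

end

/-- Let `I` be an abstract continuity ideal and let `𝔓₀` be the set of
minimal elements among the prime ideals of the form `(I : a)`. Then `𝔓₀` is
a relatively compact family: every sequence in `𝔓₀` has a pseudo-finite
subsequence. -/
theorem minimal_primes_relatively_compact {A : Type*} [CommRing A]
    (I : Ideal A) (hI : AbstractContinuityIdeal I)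
    (𝔓₀ : Set (Ideal A))
    (h𝔓₀ : 𝔓₀ = {P | (∃ a : A, P = quotIdeal I a) ∧ P.IsPrime ∧
      ∀ Q : Ideal A, (∃ b : A, Q = quotIdeal I b) → Q.IsPrime → Q ≤ P → Q = P}) :
    ∀ P : ℕ → Ideal A, (∀ n, P n ∈ 𝔓₀) →
      ∃ φ : ℕ → ℕ, StrictMono φ ∧ PseudoFinite (fun n => P (φ n)) := by
  intro P hP
  subst h𝔓₀
  choose b hb using fun n => (hP n).1
  refine (exists_strictMono_pseudoFinite_or_exists_separating P).resolve_right ?_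
  rintro ⟨a, m, ha⟩
  exact hI.false_of_separating (b := b ∘ m) (fun k => hb (m k) ▸ (hP (m k)).2.1)
    (fun k => hb (m k) ▸ (ha k).1) (fun k j hj => hb (m k) ▸ (ha k).2 j hj)
end
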